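/- arXiv:1801.03698 — 3 statements merged into one kernel-verified Lean document; each statement's English description precedes it below -/
import Mathlib

section
/- Let a_1, …, a_m be positive integers with total sum 2b, and let k be an integer with 2^k > 4b. Consider the multiset W = {2a_1, …, 2a_m} ∪ {2^k − 2b}. Then some sub-multiset of W has sum exactly 2^k if and only if there exists a subset T ⊆ {1, …, m} with Σ_{i∈T} a_i = b. -/
/-! The element `2^k - 2b` must be chosen, since all the other elements together sum to only
`4b < 2^k`; the remaining chosen elements then sum to `2b`, so they are the doubles of a
subset of the `a_i` summing to `b`. -/

theorem Multiset.le_map_iff {α β : Type*} {f : α → β} {s : Multiset β} {u : Multiset α} :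
    s ≤ u.map f ↔ ∃ v ≤ u, v.map f = s := by
  refine ⟨fun h => ?_, fun ⟨v, hvu, hvs⟩ => hvs ▸ Multiset.map_le_map hvu⟩
  induction u using Quotient.inductionOn
  induction s using Quotient.inductionOn
  obtain ⟨l, hperm, hsub⟩ := h
  obtain ⟨l', hl', rfl⟩ := List.sublist_map_iff.mp hsub
  exact ⟨l', hl'.subperm, Quot.sound hperm⟩

theorem Finset.exists_le_map_val_sum_eq_iff {ι M : Type*} [AddCommMonoid M] (S : Finset ι)
    (f : ι → M) (n : M) :
    (∃ t ≤ S.val.map f, t.sum = n) ↔ ∃ T ⊆ S, ∑ i ∈ T, f i = n := by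
  simp only [Multiset.le_map_iff]
  constructor
  · rintro ⟨_, ⟨v, hvS, rfl⟩, hsum⟩
    exact ⟨⟨v, Multiset.nodup_of_le hvS S.nodup⟩, Finset.val_le_iff.mp hvS, hsum⟩
  · rintro ⟨T, hTS, hsum⟩
    exact ⟨_, ⟨T.val, Finset.val_le_iff.mpr hTS, rfl⟩, hsum⟩

theorem Multiset.exists_le_cons_sum_eq_iff {s : Multiset ℕ} {c n : ℕ} (hs : s.sum < n)
    (hc : c ≤ n) : (∃ t ≤ c ::ₘ s, t.sum = n) ↔ ∃ t ≤ s, t.sum = n - c := by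
  constructor
  · rintro ⟨t, hts, hsum⟩
    by_cases hct : c ∈ t
    · obtain ⟨t', rfl⟩ := Multiset.exists_cons_of_mem hct
      refine ⟨t', (Multiset.cons_le_cons_iff c).mp hts, ?_⟩
      rw [Multiset.sum_cons] at hsum
      omega
    · obtain ⟨u, rfl⟩ := Multiset.le_iff_exists_add.mp ((Multiset.le_cons_of_notMem hct).mp hts)
      rw [Multiset.sum_add] at hs
      omega
  · rintro ⟨t, hts, hsum⟩
    exact ⟨c ::ₘ t, Multiset.cons_le_cons c hts, by rw [Multiset.sum_cons]; omega⟩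

theorem partition_reduction_general (m b k : ℕ) (a : Fin m → ℕ)
    (hsum : ∑ i, a i = 2 * b) (hk : 4 * b < 2 ^ k) :
    (∃ t ≤ ((2 ^ k - 2 * b) ::ₘ (Finset.univ.val.map (fun i => 2 * a i)) : Multiset ℕ),
        t.sum = 2 ^ k) ↔
      ∃ T : Finset (Fin m), ∑ i ∈ T, a i = b := by
  have hdouble_sum : (Finset.univ.val.map (fun i => 2 * a i)).sum = 4 * b := by
    rw [Finset.sum_map_val, ← Finset.mul_sum, hsum]; ring
  rw [Multiset.exists_le_cons_sum_eq_iff (hdouble_sum ▸ hk) (Nat.sub_le _ _),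
    Nat.sub_sub_self (by omega), Finset.exists_le_map_val_sum_eq_iff]
  simp only [Finset.subset_univ, true_and, ← Finset.mul_sum, mul_right_inj' two_ne_zero]

/-- Some sub-multiset of `{2a_1, …, 2a_m, 2^k - 2b}` sums to `2^k` iff some
subset of the `a_i` sums to `b`. -/
theorem partition_reduction (m b k : ℕ) (a : Fin m → ℕ) (hpos : ∀ i, 0 < a i)
    (hsum : ∑ i, a i = 2 * b) (hk : 4 * b < 2 ^ k) :
    (∃ t ≤ ((2 ^ k - 2 * b) ::ₘ (Finset.univ.val.map (fun i => 2 * a i)) : Multiset ℕ),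
        t.sum = 2 ^ k) ↔
      ∃ T : Finset (Fin m), ∑ i ∈ T, a i = b :=
  partition_reduction_general m b k a hsum hk
end

section
/- Define the leader's objective-control value V(L, F, c) as the maximum of w(S_2) over all pairs of disjoint subsets S_1, S_2 ⊆ L satisfying w(S_1) ≤ c and w(S_1) + G(c − w(S_1)) + w(S_2) ≤ c, where G(C) denotes the total weight packed by the greedy algorithm on the items of F sorted in non-increasing weight order into capacity C. Consider the instance with L-weights {a_1, …, a_m, M}, a single F-item of weight M + 1, and capacity c = M + b, where Σ a_i = 2b and M > 2b. If there exists a subset T ⊆ {1,…,m} with Σ_{i∈T} a_i = b, then V(L, F, c) = M. -/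
/-!
The leader reaches `M` by packing the subset `T` of weight `b` first, which leaves exactly `M`
of the capacity, too little for the follower's item `M + 1`, and then packing the item `M`.
Conversely, since the capacity `M + b` is below twice `M + 1`, whatever the follower does,
less than `M + 1` remains for the leader's second set.
-/

/-- Greedy packing: total packed weight. -/
def greedyPack : List ℕ → ℕ → ℕ
  | [], _ => 0
  | w :: ws, C => if w ≤ C then w + greedyPack ws (C - w) else greedyPack ws C

theorem greedyPack_singleton (w C : ℕ) : greedyPack [w] C = if w ≤ C then w else 0 := by
  simp [greedyPack]

theorem lt_of_add_greedyPack_singleton_add_le {x y w c : ℕ} (hc : c < 2 * w)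
    (h : x + greedyPack [w] (c - x) + y ≤ c) : y < w := by
  rw [greedyPack_singleton] at h
  split_ifs at h <;> omega

theorem objControl_yes_general (m b M : ℕ) (a : Fin m → ℕ) (hM : 2 * b < M)
    (hT : ∃ T : Finset (Fin m), ∑ i ∈ T, a i = b) :
    IsGreatest {v : ℕ | ∃ t1 t2 : Multiset ℕ,
      t1 + t2 ≤ (M ::ₘ Finset.univ.val.map a : Multiset ℕ) ∧
      t1.sum ≤ M + b ∧
      t1.sum + greedyPack [M + 1] (M + b - t1.sum) + t2.sum ≤ M + b ∧
      v = t2.sum} M := by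
  obtain ⟨T, hTsum⟩ := hT
  replace hTsum : (T.val.map a).sum = b := hTsum
  refine ⟨⟨T.val.map a, {M}, ?_, by omega, ?_, by simp⟩, ?_⟩
  · rw [add_comm, Multiset.singleton_add]
    exact Multiset.cons_le_cons M (Multiset.map_le_map (Finset.val_le_iff.mpr T.subset_univ))
  · simp [hTsum, greedyPack_singleton, add_comm]
  · rintro v ⟨t1, t2, -, -, hfit, rfl⟩
    exact Nat.le_of_lt_succ (lt_of_add_greedyPack_singleton_add_le (by omega) hfit)

/-- Objective-control value: if some subset of the `a_i` sums to `b`, then the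
leader's value on the instance with L-weights `{a_1,…,a_m, M}`, one F-item of
weight `M+1`, and capacity `c = M + b`, equals `M`. -/
theorem objControl_yes (m b M : ℕ) (a : Fin m → ℕ) (hpos : ∀ i, 0 < a i)
    (hb : 1 ≤ b) (hsum : ∑ i, a i = 2 * b) (hM : 2 * b < M)
    (hT : ∃ T : Finset (Fin m), ∑ i ∈ T, a i = b) :
    IsGreatest {v : ℕ | ∃ t1 t2 : Multiset ℕ,
      t1 + t2 ≤ (M ::ₘ Finset.univ.val.map a : Multiset ℕ) ∧
      t1.sum ≤ M + b ∧
      t1.sum + greedyPack [M + 1] (M + b - t1.sum) + t2.sum ≤ M + b ∧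
      v = t2.sum} M :=
  objControl_yes_general m b M a hM hT
end

section
/- With L-weights {a_1, …, a_m, M}, one F-item of weight M + 1, capacity c = M + b, Σ a_i = 2b, b ≥ 1, and M > 2b: the leader's objective-control value V(L, F, c) satisfies V ≥ M if and only if there exists T ⊆ {1,…,m} with Σ_{i∈T} a_i = b; in the negative case V ≤ b − 1 < M. -/
theorem Multiset.sum_le_sum_of_le {α : Type*} [AddCommMonoid α] [PartialOrder α]
    [CanonicallyOrderedAdd α] {s t : Multiset α} (h : s ≤ t) : s.sum ≤ t.sum := by
  obtain ⟨u, rfl⟩ := Multiset.le_iff_exists_add.mp h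
  rw [Multiset.sum_add]
  exact le_self_add

theorem Multiset.exists_le_map_eq {α β : Type*} {f : α → β} {s : Multiset α} {t : Multiset β}
    (h : t ≤ s.map f) : ∃ s' ≤ s, s'.map f = t := by
  induction s using Quotient.inductionOn with | h l₂ => ?_
  induction t using Quotient.inductionOn with | h l₁ => ?_
  obtain ⟨l, hperm, hsub⟩ := h
  obtain ⟨l', hl', rfl⟩ := List.sublist_map_iff.mp hsub
  exact ⟨l', hl'.subperm, Quot.sound hperm⟩

theorem Multiset.le_of_add_le_cons_of_mem {α : Type*} {x : α} {s t u : Multiset α}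
    (h : s + t ≤ x ::ₘ u) (hx : x ∈ s) : t ≤ u := by
  obtain ⟨s', rfl⟩ := Multiset.exists_cons_of_mem hx
  rw [Multiset.cons_add, Multiset.cons_le_cons_iff] at h
  exact (Multiset.le_add_left t s').trans h

theorem Finset.exists_subset_sum_eq_of_le_map {ι α : Type*} [AddCommMonoid α] (s : Finset ι)
    (a : ι → α) {t : Multiset α} (ht : t ≤ s.val.map a) :
    ∃ T ⊆ s, ∑ i ∈ T, a i = t.sum := by
  obtain ⟨u, hu, rfl⟩ := Multiset.exists_le_map_eq ht
  exact ⟨⟨u, Multiset.nodup_of_le hu s.nodup⟩, Finset.val_le_iff.mp hu, rfl⟩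

/-- `S₁ + S₂ ≤ L` encodes disjoint sub-multisets of the leader's items `L`. -/
def ObjControlFeasible (L : Multiset ℕ) (F c : ℕ) (S₁ S₂ : Multiset ℕ) : Prop :=
  S₁ + S₂ ≤ L ∧ S₁.sum ≤ c ∧ S₁.sum + greedyPack [F] (c - S₁.sum) + S₂.sum ≤ c

section BigItem

variable {A S₁ S₂ : Multiset ℕ} {b M : ℕ}

theorem ObjControlFeasible.le_sum_left (h : ObjControlFeasible A (M + 1) (M + b) S₁ S₂)
    (hS₂ : b ≤ S₂.sum) : b ≤ S₁.sum ∧ S₁.sum + S₂.sum ≤ M + b := by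
  obtain ⟨-, -, hcap⟩ := h
  rw [greedyPack_singleton] at hcap
  split_ifs at hcap <;> omega

theorem ObjControlFeasible.exists_le_sum_eq (hA : A.sum = 2 * b)
    (h : ObjControlFeasible (M ::ₘ A) (M + 1) (M + b) S₁ S₂) (hS₂ : b ≤ S₂.sum) :
    ∃ t ≤ A, t.sum = b := by
  obtain ⟨hS₁, hS₁₂⟩ := h.le_sum_left hS₂
  have hle : S₁ + S₂ ≤ M ::ₘ A := h.1
  by_cases hM₁ : M ∈ S₁
  · have := Multiset.le_sum_of_mem hM₁
    exact ⟨S₂, Multiset.le_of_add_le_cons_of_mem hle hM₁, by omega⟩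
  by_cases hM₂ : M ∈ S₂
  · have := Multiset.le_sum_of_mem hM₂
    exact ⟨S₁, Multiset.le_of_add_le_cons_of_mem (add_comm S₁ S₂ ▸ hle) hM₂, by omega⟩
  have hleA : S₁ + S₂ ≤ A := (Multiset.le_cons_of_notMem (by simp [hM₁, hM₂])).mp hle
  have := Multiset.sum_le_sum_of_le hleA
  rw [Multiset.sum_add] at this
  exact ⟨S₂, (Multiset.le_add_left S₂ S₁).trans hleA, by omega⟩

theorem objControlFeasible_of_sum_eq {t : Multiset ℕ} (ht : t ≤ A) (htb : t.sum = b) :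
    ObjControlFeasible (M ::ₘ A) (M + 1) (M + b) t {M} := by
  refine ⟨?_, ?_, ?_⟩
  · rw [add_comm, Multiset.singleton_add]
    exact Multiset.cons_le_cons M ht
  · omega
  · simp [greedyPack_singleton, htb, add_comm]

end BigItem

theorem objControl_iff_general (m b M : ℕ) (a : Fin m → ℕ)
    (hsum : ∑ i, a i = 2 * b) (hM : 2 * b < M) :
    ((∃ t1 t2 : Multiset ℕ,
        t1 + t2 ≤ (M ::ₘ Finset.univ.val.map a : Multiset ℕ) ∧
        t1.sum ≤ M + b ∧
        t1.sum + greedyPack [M + 1] (M + b - t1.sum) + t2.sum ≤ M + b ∧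
        M ≤ t2.sum) ↔
      ∃ T : Finset (Fin m), ∑ i ∈ T, a i = b) ∧
    ((¬ ∃ T : Finset (Fin m), ∑ i ∈ T, a i = b) →
      (∀ t1 t2 : Multiset ℕ,
        t1 + t2 ≤ (M ::ₘ Finset.univ.val.map a : Multiset ℕ) →
        t1.sum ≤ M + b →
        t1.sum + greedyPack [M + 1] (M + b - t1.sum) + t2.sum ≤ M + b →
        t2.sum ≤ b - 1) ∧ b - 1 < M) := by
  have hA : (Finset.univ.val.map a).sum = 2 * b := hsum
  have subset_sum : ∀ S₁ S₂, ObjControlFeasible (M ::ₘ Finset.univ.val.map a) (M + 1) (M + b)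
      S₁ S₂ → b ≤ S₂.sum → ∃ T : Finset (Fin m), ∑ i ∈ T, a i = b := by
    intro S₁ S₂ h hS₂
    obtain ⟨t, ht, rfl⟩ := h.exists_le_sum_eq hA hS₂
    obtain ⟨T, -, hT⟩ := Finset.exists_subset_sum_eq_of_le_map _ a ht
    exact ⟨T, hT⟩
  refine ⟨⟨?_, ?_⟩, fun hno => ⟨?_, by omega⟩⟩
  · rintro ⟨S₁, S₂, hle, hS₁, hcap, hMS₂⟩
    exact subset_sum S₁ S₂ ⟨hle, hS₁, hcap⟩ (by omega)
  · rintro ⟨T, hT⟩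
    have hTA : T.val.map a ≤ Finset.univ.val.map a :=
      Multiset.map_le_map (Finset.val_le_iff.mpr T.subset_univ)
    obtain ⟨hle, hS₁, hcap⟩ := objControlFeasible_of_sum_eq (M := M) hTA hT
    exact ⟨_, _, hle, hS₁, hcap, (Multiset.sum_singleton M).ge⟩
  · intro S₁ S₂ hle hS₁ hcap
    by_contra! hS₂
    exact hno (subset_sum S₁ S₂ ⟨hle, hS₁, hcap⟩ (by omega))

/-- The leader's objective-control value `V` satisfies `V ≥ M` iff some subset
of the `a_i` sums to `b`; in the negative case every feasible value is at most
`b - 1 < M`. -/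
theorem objControl_iff (m b M : ℕ) (a : Fin m → ℕ) (hpos : ∀ i, 0 < a i)
    (hb : 1 ≤ b) (hsum : ∑ i, a i = 2 * b) (hM : 2 * b < M) :
    ((∃ t1 t2 : Multiset ℕ,
        t1 + t2 ≤ (M ::ₘ Finset.univ.val.map a : Multiset ℕ) ∧
        t1.sum ≤ M + b ∧
        t1.sum + greedyPack [M + 1] (M + b - t1.sum) + t2.sum ≤ M + b ∧
        M ≤ t2.sum) ↔
      ∃ T : Finset (Fin m), ∑ i ∈ T, a i = b) ∧
    ((¬ ∃ T : Finset (Fin m), ∑ i ∈ T, a i = b) →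
      (∀ t1 t2 : Multiset ℕ,
        t1 + t2 ≤ (M ::ₘ Finset.univ.val.map a : Multiset ℕ) →
        t1.sum ≤ M + b →
        t1.sum + greedyPack [M + 1] (M + b - t1.sum) + t2.sum ≤ M + b →
        t2.sum ≤ b - 1) ∧ b - 1 < M) :=
  objControl_iff_general m b M a hsum hM
end
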